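/- For any commutative ring R and any type ι, let F = FreeGroup ι and let I_{R[F]} be the augmentation ideal of R[F]. The family indexed by ι whose i-th member is (of i) − 1 ∈ I_{R[F]}, where of i denotes the image in R[F] of the generator FreeGroup.of i, is a basis of I_{R[F]} as a left R[F]-module; in particular I_{R[F]} is a free left R[F]-module. -/

import Mathlib

/-- The augmentation `R[G] →ₐ[R] R` of the group ring `R[G] = MonoidAlgebra R G`,
sending `∑ a_g · g` to `∑ a_g`. -/
noncomputable def augmentation (R : Type*) [CommRing R] (G : Type*) [Group G] :
    MonoidAlgebra R G →ₐ[R] R :=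
  MonoidAlgebra.lift R R G 1

/-- The augmentation ideal `I_{R[G]}` of the group ring, i.e. the kernel of the
augmentation, regarded as a left ideal (hence a left `R[G]`-module). -/
noncomputable def augIdeal (R : Type*) [CommRing R] (G : Type*) [Group G] :
    Ideal (MonoidAlgebra R G) :=
  RingHom.ker (augmentation R G).toRingHom

/-!
Fox calculus. Since `F` is free, the assignment `xᵢ ↦ eᵢ` extends to a crossed homomorphism
`d : F → R[F]^(ι)`, i.e. `d (g h) = d g + g • d h`; its `R`-linear extension `D` is the Fox
derivative and satisfies the Leibniz rule `D (a b) = ε(b) D a + a D b`. Writing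
`Φ c = ∑ cᵢ (xᵢ - 1)`, both `Φ ∘ d` and `g ↦ g - 1` are crossed homomorphisms agreeing on the
generators, whence `Φ (D a) = a - ε(a)`; and the Leibniz rule gives `D (a (xᵢ - 1)) = a eᵢ`,
so `D ∘ Φ = id`. Hence `Φ` is an isomorphism of the free module `R[F]^(ι)` onto `I_{R[F]}`.
-/

open groupCohomology

noncomputable def DistribMulAction.toMulAutMultiplicative (G M : Type*) [Group G]
    [AddCommGroup M] [DistribMulAction G M] : G →* MulAut (Multiplicative M) where
  toFun g := AddEquiv.toMultiplicative (DistribMulAction.toAddAut G M g)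
  map_one' := by ext; simp
  map_mul' g h := by ext; simp [mul_smul]

namespace FreeGroup

variable {ι M : Type*} [AddCommGroup M] [DistribMulAction (FreeGroup ι) M]

/-- Crossed homomorphisms `FreeGroup ι → M` are the `M`-components of the sections of
`M ⋊ FreeGroup ι → FreeGroup ι`, and those are given by the universal property. -/
noncomputable def liftCocycleHom (f : ι → M) :
    FreeGroup ι →* Multiplicative M ⋊[DistribMulAction.toMulAutMultiplicative _ M] FreeGroup ι :=
  FreeGroup.lift fun i => ⟨.ofAdd (f i), of i⟩

noncomputable def liftCocycle (f : ι → M) (g : FreeGroup ι) : M :=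
  (liftCocycleHom f g).left.toAdd

theorem liftCocycleHom_right (f : ι → M) (g : FreeGroup ι) : (liftCocycleHom f g).right = g :=
  DFunLike.congr_fun (ext_hom (SemidirectProduct.rightHom.comp (liftCocycleHom f)) (.id _)
    fun i => by simp [liftCocycleHom]) g

theorem liftCocycle_of (f : ι → M) (i : ι) : liftCocycle f (of i) = f i := by
  simp [liftCocycle, liftCocycleHom]

theorem isCocycle₁_liftCocycle (f : ι → M) : IsCocycle₁ (liftCocycle f) := by
  intro g h
  have left_mul : (liftCocycleHom f (g * h)).left = (liftCocycleHom f g).left *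
      DistribMulAction.toMulAutMultiplicative _ M g (liftCocycleHom f h).left := by
    rw [_root_.map_mul, SemidirectProduct.mul_left, liftCocycleHom_right]
  rw [liftCocycle, left_mul, toAdd_mul, add_comm]
  rfl

theorem isCocycle₁_ext {d d' : FreeGroup ι → M} (hd : IsCocycle₁ d) (hd' : IsCocycle₁ d')
    (h : ∀ i, d (of i) = d' (of i)) : d = d' := by
  funext g
  induction g with
  | C1 => rw [map_one_of_isCocycle₁ hd, map_one_of_isCocycle₁ hd']
  | of i => exact h i
  | inv_of i ih =>
    have map_inv_of {d : FreeGroup ι → M} (hd : IsCocycle₁ d) :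
        d (of i)⁻¹ = (of i)⁻¹ • -d (of i) :=
      eq_inv_smul_iff.mpr (map_inv_of_isCocycle₁ hd (of i))
    rw [map_inv_of hd, map_inv_of hd', ih]
  | mul g g' ihg ihg' => rw [hd, hd', ihg, ihg']

end FreeGroup

namespace MonoidAlgebra

variable {R G : Type*} [CommRing R] [Group G]

/-- Not an instance: it would clash with `MonoidAlgebra.distribMulAction` whenever `G` acts on
`R`, e.g. for `G = Rˣ`. -/
noncomputable abbrev leftRegularAction : DistribMulAction G (MonoidAlgebra R G) :=
  DistribMulAction.compHom _ (of R G).toHomUnits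

attribute [local instance] leftRegularAction

theorem isScalarTower_leftRegularAction :
    IsScalarTower G (MonoidAlgebra R G) (MonoidAlgebra R G) :=
  ⟨fun _ _ _ => mul_assoc _ _ _⟩

attribute [local instance] isScalarTower_leftRegularAction

theorem augmentation_of (g : G) : augmentation R G (of R G g) = 1 := by
  simp [augmentation]

theorem mem_augIdeal_iff {x : MonoidAlgebra R G} : x ∈ augIdeal R G ↔ augmentation R G x = 0 :=
  Iff.rfl

theorem of_sub_one_mem_augIdeal (g : G) : of R G g - 1 ∈ augIdeal R G := by
  rw [mem_augIdeal_iff, map_sub, augmentation_of, map_one, sub_self]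

theorem isCocycle₁_of_sub_one : IsCocycle₁ fun g : G => of R G g - 1 := by
  intro g h
  change of R G (g * h) - 1 = of R G g * (of R G h - 1) + (of R G g - 1)
  rw [map_mul, mul_sub, mul_one]
  abel

section Cocycle

variable {M N : Type*} [AddCommGroup M] [Module (MonoidAlgebra R G) M] [DistribMulAction G M]
  [IsScalarTower G (MonoidAlgebra R G) M]

theorem smul_eq_of_smul (g : G) (m : M) : g • m = of R G g • m := by
  rw [← smul_one_smul (MonoidAlgebra R G) g m]
  change (of R G g * 1) • m = _
  rw [mul_one]

theorem _root_.groupCohomology.IsCocycle₁.linearMap_comp [AddCommGroup N]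
    [Module (MonoidAlgebra R G) N] [DistribMulAction G N] [IsScalarTower G (MonoidAlgebra R G) N]
    {d : G → M} (hd : IsCocycle₁ d) (Φ : M →ₗ[MonoidAlgebra R G] N) : IsCocycle₁ (Φ ∘ d) := by
  intro g h
  simp only [Function.comp_apply, hd g h, map_add, smul_eq_of_smul (R := R), map_smul]

end Cocycle

section LinearExtension

variable {M : Type*} [AddCommGroup M] [Module R M]

variable (R) in
noncomputable def linearExtension (d : G → M) : MonoidAlgebra R G →ₗ[R] M :=
  Finsupp.linearCombination R d ∘ₗ (coeffLinearEquiv R).toLinearMap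

theorem linearExtension_of (d : G → M) (g : G) : linearExtension R d (of R G g) = d g := by
  simp [linearExtension]

theorem linearExtension_one [DistribMulAction G M] {d : G → M} (hd : IsCocycle₁ d) :
    linearExtension R d 1 = 0 := by
  rw [← map_one (of R G), linearExtension_of, map_one_of_isCocycle₁ hd]

variable [Module (MonoidAlgebra R G) M] [IsScalarTower R (MonoidAlgebra R G) M]

theorem apply_linearExtension_eq_sub_augmentation {d : G → M}
    (Φ : M →ₗ[MonoidAlgebra R G] MonoidAlgebra R G) (hΦ : ∀ g, Φ (d g) = of R G g - 1)
    (a : MonoidAlgebra R G) :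
    Φ (linearExtension R d a) = a - algebraMap R _ (augmentation R G a) := by
  induction a using MonoidAlgebra.induction_on with
  | of g => rw [linearExtension_of, hΦ, augmentation_of, map_one]
  | add a b ha hb =>
    rw [map_add, map_add, ha, hb, map_add, map_add]
    abel
  | smul r a ha =>
    rw [map_smul, LinearMap.map_smul_of_tower, ha, map_smul, smul_sub, smul_eq_mul, map_mul,
      ← Algebra.smul_def]

variable [DistribMulAction G M] [IsScalarTower G (MonoidAlgebra R G) M]

theorem linearExtension_of_mul {d : G → M} (hd : IsCocycle₁ d) (g : G) (b : MonoidAlgebra R G) :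
    linearExtension R d (of R G g * b) =
      augmentation R G b • d g + of R G g • linearExtension R d b := by
  induction b using MonoidAlgebra.induction_on with
  | of h =>
    rw [← map_mul, linearExtension_of, linearExtension_of, augmentation_of, one_smul, hd,
      smul_eq_of_smul (R := R), add_comm]
  | add b b' hb hb' =>
    rw [mul_add, map_add, hb, hb', map_add, add_smul, map_add, smul_add]
    abel
  | smul r b hb =>
    rw [mul_smul_comm, map_smul, hb, map_smul, map_smul, smul_add, smul_comm r (of R G g),
      smul_assoc]

theorem linearExtension_mul {d : G → M} (hd : IsCocycle₁ d) (a b : MonoidAlgebra R G) :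
    linearExtension R d (a * b) =
      augmentation R G b • linearExtension R d a + a • linearExtension R d b := by
  induction a using MonoidAlgebra.induction_on with
  | of g => rw [linearExtension_of_mul hd, linearExtension_of]
  | add a a' ha ha' =>
    rw [add_mul, map_add, ha, ha', map_add, smul_add, add_smul]
    abel
  | smul r a ha =>
    rw [smul_mul_assoc, map_smul, ha, map_smul, smul_add, smul_comm r (augmentation R G b),
      smul_assoc]

end LinearExtension

end MonoidAlgebra

namespace FreeGroup

attribute [local instance] MonoidAlgebra.leftRegularAction
  MonoidAlgebra.isScalarTower_leftRegularAction

variable (R ι : Type*) [CommRing R]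

noncomputable def foxCocycle : FreeGroup ι → ι →₀ MonoidAlgebra R (FreeGroup ι) :=
  liftCocycle fun i => Finsupp.single i 1

noncomputable def foxDerivative :
    MonoidAlgebra R (FreeGroup ι) →ₗ[R] ι →₀ MonoidAlgebra R (FreeGroup ι) :=
  MonoidAlgebra.linearExtension R (foxCocycle R ι)

noncomputable def augIdealGen (i : ι) : MonoidAlgebra R (FreeGroup ι) :=
  MonoidAlgebra.of R (FreeGroup ι) (of i) - 1

variable {R ι}

theorem isCocycle₁_foxCocycle : IsCocycle₁ (foxCocycle R ι) :=
  isCocycle₁_liftCocycle _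

theorem augIdealGen_mem_augIdeal (i : ι) : augIdealGen R ι i ∈ augIdeal R (FreeGroup ι) :=
  MonoidAlgebra.of_sub_one_mem_augIdeal _

theorem linearCombination_foxCocycle :
    Finsupp.linearCombination _ (augIdealGen R ι) ∘ foxCocycle R ι =
      fun g => MonoidAlgebra.of R (FreeGroup ι) g - 1 :=
  isCocycle₁_ext (isCocycle₁_foxCocycle.linearMap_comp _) MonoidAlgebra.isCocycle₁_of_sub_one
    fun i => by
      rw [Function.comp_apply, foxCocycle, liftCocycle_of, Finsupp.linearCombination_single,
        one_smul, augIdealGen]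

theorem linearCombination_foxDerivative (a : MonoidAlgebra R (FreeGroup ι)) :
    Finsupp.linearCombination _ (augIdealGen R ι) (foxDerivative R ι a) =
      a - algebraMap R _ (augmentation R (FreeGroup ι) a) :=
  MonoidAlgebra.apply_linearExtension_eq_sub_augmentation _
    (congrFun linearCombination_foxCocycle) a

theorem foxDerivative_augIdealGen (i : ι) :
    foxDerivative R ι (augIdealGen R ι i) = Finsupp.single i 1 := by
  rw [augIdealGen, map_sub, foxDerivative, MonoidAlgebra.linearExtension_of,
    MonoidAlgebra.linearExtension_one isCocycle₁_foxCocycle, foxCocycle, liftCocycle_of, sub_zero]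

theorem foxDerivative_linearCombination (c : ι →₀ MonoidAlgebra R (FreeGroup ι)) :
    foxDerivative R ι (Finsupp.linearCombination _ (augIdealGen R ι) c) = c := by
  induction c using Finsupp.induction_linear with
  | zero => rw [map_zero, map_zero]
  | add c c' hc hc' => rw [map_add, map_add, hc, hc']
  | single i a =>
    rw [Finsupp.linearCombination_single, smul_eq_mul, foxDerivative,
      MonoidAlgebra.linearExtension_mul isCocycle₁_foxCocycle, ← foxDerivative,
      foxDerivative_augIdealGen, MonoidAlgebra.mem_augIdeal_iff.mp (augIdealGen_mem_augIdeal i),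
      zero_smul, zero_add, Finsupp.smul_single, smul_eq_mul, mul_one]

theorem linearCombination_augIdealGen_mem (c : ι →₀ MonoidAlgebra R (FreeGroup ι)) :
    Finsupp.linearCombination _ (augIdealGen R ι) c ∈ augIdeal R (FreeGroup ι) := by
  rw [Finsupp.linearCombination_apply]
  exact Ideal.sum_mem _ fun i _ => Ideal.mul_mem_left _ _ (augIdealGen_mem_augIdeal i)

variable (R ι) in
noncomputable def augIdealEquiv :
    (ι →₀ MonoidAlgebra R (FreeGroup ι)) ≃ₗ[MonoidAlgebra R (FreeGroup ι)]
      augIdeal R (FreeGroup ι) :=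
  let Φ := (Finsupp.linearCombination _ (augIdealGen R ι)).codRestrict _
    linearCombination_augIdealGen_mem
  .ofBijective Φ
    ⟨Function.LeftInverse.injective (f := Φ)
        (g := fun x : augIdeal R (FreeGroup ι) => foxDerivative R ι x)
        foxDerivative_linearCombination,
      fun x => ⟨foxDerivative R ι x, Subtype.ext <| by
        rw [LinearMap.codRestrict_apply, linearCombination_foxDerivative,
          MonoidAlgebra.mem_augIdeal_iff.mp x.2, map_zero, sub_zero]⟩⟩

theorem coe_augIdealEquiv_apply (c : ι →₀ MonoidAlgebra R (FreeGroup ι)) :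
    (augIdealEquiv R ι c : MonoidAlgebra R (FreeGroup ι)) =
      Finsupp.linearCombination _ (augIdealGen R ι) c :=
  rfl

end FreeGroup

theorem exists_basis_augIdeal_freeGroup (R : Type*) [CommRing R] (ι : Type*) :
    ∃ b : Module.Basis ι (MonoidAlgebra R (FreeGroup ι)) (augIdeal R (FreeGroup ι)),
      ∀ i : ι, (b i : MonoidAlgebra R (FreeGroup ι)) =
        MonoidAlgebra.of R (FreeGroup ι) (FreeGroup.of i) - 1 :=
  ⟨Finsupp.basisSingleOne.map (FreeGroup.augIdealEquiv R ι), fun i => by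
    rw [Module.Basis.map_apply, Finsupp.coe_basisSingleOne, FreeGroup.coe_augIdealEquiv_apply,
      Finsupp.linearCombination_single, one_smul, FreeGroup.augIdealGen]⟩
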